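/- Suppose T : S → ℝ satisfies the harmonicity condition Σ_{j=0}^{p_L-1} (T(L) - T(L_j)) = 0 for every non-minimal vertex L of a finite subtree S of regular type (equivalently Δ(μ(L)T(L)) = 0, using μ(L_j) = μ(L)/p_L). Then Δ(T(J) μ(J)^2)(J) = T(J) μ(J)^2 (1 - p_J^{-1}) for every J ∈ S \ S_min, and consequently Σ_{J ∈ S\S_min} T(J) μ(J)^2 (1 - p_J^{-1}) = T(K) μ(K)^2 - Σ_{J ∈ S_min} T(J) μ(J)^2, where K is the maximal vertex of S. -/

import Mathlib

open Finset

/-- Tree derivative: `ΔF(J) = F(J) - Σ_{children c of J} F(c)`. -/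
def treeDeriv {V : Type*} (children : V → Finset V) (F : V → ℝ) (J : V) : ℝ :=
  F J - ∑ c ∈ children J, F c

/-- A finite directed subtree `S` of regular type of a directed tree (vertices `V`,
partial order the tree order, `children J` = set of vertices covered by `J`),
with maximal vertex `K` and set of minimal vertices `Smin`. -/
structure RegularSubtree (V : Type*) [PartialOrder V] [DecidableEq V] (children : V → Finset V) where
  S : Finset V
  Smin : Finset V
  K : V
  smin_subset : Smin ⊆ S
  K_mem : K ∈ S
  K_top : ∀ J ∈ S, J ≤ K
  child_lt : ∀ J : V, ∀ c ∈ children J, c < J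
  /-- regularity: all children (in the ambient tree) of a non-minimal vertex of `S` lie in `S` -/
  regular : ∀ J ∈ S \ Smin, children J ⊆ S
  /-- minimal vertices of `S` have no children inside `S` -/
  min_no_child : ∀ J ∈ Smin, ∀ c ∈ children J, c ∉ S
  /-- every vertex of `S` other than `K` has a unique parent in `S \ Smin` -/
  parent : ∀ J ∈ S, J ≠ K → ∃! P : V, P ∈ S \ Smin ∧ J ∈ children P
  /-- `K` is not a child of any vertex of `S` -/
  K_not_child : ∀ J ∈ S, K ∉ children J

/-- The children of `J` carry `T(J) μ(J)² / p_J` in total. A childless `J` needs no special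
case: there `(0 : ℝ)⁻¹ = 0` and both sides are `T(J) μ(J)²`. -/
theorem treeDeriv_mul_sq_of_harmonic {V : Type*} (children : V → Finset V) (μ T : V → ℝ) (J : V)
    (hμ : ∀ c ∈ children J, μ c = μ J / ((children J).card : ℝ))
    (hharm : ∑ c ∈ children J, (T J - T c) = 0) :
    treeDeriv children (fun v => T v * μ v ^ 2) J
      = T J * μ J ^ 2 * (1 - ((children J).card : ℝ)⁻¹) := by
  set p : ℝ := ((children J).card : ℝ)
  have hsumT : ∑ c ∈ children J, T c = p * T J := by
    rw [sum_sub_distrib, sum_const, nsmul_eq_mul, sub_eq_zero] at hharm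
    exact hharm.symm
  have hchildren : ∑ c ∈ children J, T c * μ c ^ 2 = T J * μ J ^ 2 * p⁻¹ := by
    calc ∑ c ∈ children J, T c * μ c ^ 2
        = (∑ c ∈ children J, T c) * (μ J / p) ^ 2 := by
          rw [sum_mul]
          exact sum_congr rfl fun c hc => by rw [hμ c hc]
      _ = T J * μ J ^ 2 * (p / (p * p)) := by rw [hsumT]; ring
      _ = T J * μ J ^ 2 * p⁻¹ := by rw [div_self_mul_self']
  rw [treeDeriv, hchildren]
  ring

namespace RegularSubtree

variable {V : Type*} [PartialOrder V] [DecidableEq V] {children : V → Finset V}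
  (R : RegularSubtree V children)

theorem biUnion_children_eq_erase : (R.S \ R.Smin).biUnion children = R.S.erase R.K := by
  ext v
  simp only [mem_biUnion, mem_erase]
  constructor
  · rintro ⟨J, hJ, hv⟩
    exact ⟨fun hvK => R.K_not_child J (mem_sdiff.mp hJ).1 (hvK ▸ hv), R.regular J hJ hv⟩
  · rintro ⟨hvK, hv⟩
    obtain ⟨P, hP, -⟩ := R.parent v hv hvK
    exact ⟨P, hP⟩

theorem pairwiseDisjoint_children : (↑(R.S \ R.Smin) : Set V).PairwiseDisjoint children := by
  intro a ha b hb hab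
  refine disjoint_left.mpr fun c hca hcb => hab ?_
  have hcS : c ∈ R.S := R.regular a ha hca
  have hcK : c ≠ R.K := fun hcK => R.K_not_child a (mem_sdiff.mp ha).1 (hcK ▸ hca)
  obtain ⟨P, -, huniq⟩ := R.parent c hcS hcK
  rw [huniq a ⟨ha, hca⟩, huniq b ⟨hb, hcb⟩]

theorem sum_sum_children {M : Type*} [AddCommMonoid M] (F : V → M) :
    ∑ J ∈ R.S \ R.Smin, ∑ c ∈ children J, F c = ∑ v ∈ R.S.erase R.K, F v := by
  rw [← sum_biUnion R.pairwiseDisjoint_children, R.biUnion_children_eq_erase]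

/-- Summation by parts: every vertex of `S` except `K` is counted once as a child. -/
theorem sum_treeDeriv (F : V → ℝ) :
    ∑ J ∈ R.S \ R.Smin, treeDeriv children F J = F R.K - ∑ J ∈ R.Smin, F J := by
  simp only [treeDeriv, sum_sub_distrib]
  rw [R.sum_sum_children, sum_sdiff_eq_sub R.smin_subset, sum_erase_eq_sub R.K_mem]
  ring

end RegularSubtree

theorem harmonic_T_functional_general {V : Type*} [PartialOrder V] [DecidableEq V]
    (children : V → Finset V)
    (R : RegularSubtree V children) (μ : V → ℝ) (T : V → ℝ)
    (hμ : ∀ J ∈ R.S \ R.Smin, ∀ c ∈ children J, μ c = μ J / ((children J).card : ℝ))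
    (hharm : ∀ L ∈ R.S \ R.Smin, ∑ c ∈ children L, (T L - T c) = 0) :
    (∀ J ∈ R.S \ R.Smin,
        treeDeriv children (fun v => T v * μ v ^ 2) J
          = T J * μ J ^ 2 * (1 - ((children J).card : ℝ)⁻¹)) ∧
    ∑ J ∈ R.S \ R.Smin, T J * μ J ^ 2 * (1 - ((children J).card : ℝ)⁻¹)
      = T R.K * μ R.K ^ 2 - ∑ J ∈ R.Smin, T J * μ J ^ 2 := by
  have hderiv : ∀ J ∈ R.S \ R.Smin,
      treeDeriv children (fun v => T v * μ v ^ 2) J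
        = T J * μ J ^ 2 * (1 - ((children J).card : ℝ)⁻¹) := fun J hJ =>
    treeDeriv_mul_sq_of_harmonic children μ T J (hμ J hJ) (hharm J hJ)
  refine ⟨hderiv, ?_⟩
  rw [← sum_congr rfl hderiv, R.sum_treeDeriv]

/-- if `T` is harmonic on `S` (`Σ_j (T(L) - T(L_j)) = 0` for every
non-minimal `L`, equivalently `Δ(μT) = 0`), then
`Δ(Tμ²)(J) = T(J) μ(J)² (1 - p_J⁻¹)` for every `J ∈ S \ S_min`, and consequently
`Σ_{J ∈ S\S_min} T(J) μ(J)² (1 - p_J⁻¹) = T(K) μ(K)² - Σ_{J ∈ S_min} T(J) μ(J)²`. -/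
theorem harmonic_T_functional {V : Type*} [PartialOrder V] [DecidableEq V]
    (children : V → Finset V)
    (R : RegularSubtree V children) (μ : V → ℝ) (T : V → ℝ)
    (hμpos : ∀ J, 0 < μ J)
    (hp : ∀ J ∈ R.S \ R.Smin, 1 ≤ (children J).card)
    (hμ : ∀ J ∈ R.S \ R.Smin, ∀ c ∈ children J, μ c = μ J / ((children J).card : ℝ))
    (hharm : ∀ L ∈ R.S \ R.Smin, ∑ c ∈ children L, (T L - T c) = 0) :
    (∀ J ∈ R.S \ R.Smin,
        treeDeriv children (fun v => T v * μ v ^ 2) J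
          = T J * μ J ^ 2 * (1 - ((children J).card : ℝ)⁻¹)) ∧
    ∑ J ∈ R.S \ R.Smin, T J * μ J ^ 2 * (1 - ((children J).card : ℝ)⁻¹)
      = T R.K * μ R.K ^ 2 - ∑ J ∈ R.Smin, T J * μ J ^ 2 :=
  harmonic_T_functional_general children R μ T hμ hharm
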